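/- Let p and q be integers with 0 < p < q, and let BS(q,p) be the Baumslag–Solitar group with generators a, b. For every integer k ≥ 1, the word lengths with respect to the generating set {a, b} satisfy ‖a^{qk}‖ ≤ q + 1 + ‖a^{q·⌊pk/q⌋}‖. -/

import Mathlib

/-!
The relation gives `a^{qk} = b a^{pk} b⁻¹`, and `pk = q⌊pk/q⌋ + r` with `0 ≤ r < q`. Hence
`a^{qk} = b · a^{q⌊pk/q⌋} · a^r · b⁻¹`, a product of words of lengths `1`, `‖a^{q⌊pk/q⌋}‖`,
at most `q - 1`, and `1`.
-/

/-- The word length of `g` with respect to a generating set `S`: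
the smallest `n` such that `g` is a product of `n` elements of `S ∪ S⁻¹`. -/
noncomputable def wordLength {G : Type*} [Group G] (S : Set G) (g : G) : ℕ :=
  sInf {n : ℕ | ∃ w : List G, w.length = n ∧ (∀ x ∈ w, x ∈ S ∨ x⁻¹ ∈ S) ∧ w.prod = g}

/-- The Baumslag–Solitar group `BS(q,p) = ⟨a, b ∣ a^q = b a^p b⁻¹⟩`. -/
abbrev BaumslagSolitar (q p : ℤ) : Type :=
  PresentedGroup
    ({FreeGroup.of true ^ q *
        (FreeGroup.of false * FreeGroup.of true ^ p * (FreeGroup.of false)⁻¹)⁻¹} :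
      Set (FreeGroup Bool))

/-- The generator `a` of `BS(q,p)`. -/
noncomputable def BSa (q p : ℤ) : BaumslagSolitar q p := PresentedGroup.of true

/-- The generator `b` of `BS(q,p)`. -/
noncomputable def BSb (q p : ℤ) : BaumslagSolitar q p := PresentedGroup.of false

section WordLength

variable {G : Type*} [Group G] {S : Set G}

theorem wordLength_prod_le_length {w : List G} (hw : ∀ x ∈ w, x ∈ S ∨ x⁻¹ ∈ S) :
    wordLength S w.prod ≤ w.length :=
  Nat.sInf_le ⟨w, rfl, hw, rfl⟩

theorem exists_word_of_mem_closure {g : G} (hg : g ∈ Subgroup.closure S) :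
    ∃ w : List G, (∀ x ∈ w, x ∈ S ∨ x⁻¹ ∈ S) ∧ w.prod = g := by
  rw [← Subgroup.mem_toSubmonoid, Subgroup.closure_toSubmonoid] at hg
  obtain ⟨w, hw, rfl⟩ := Submonoid.exists_list_of_mem_closure hg
  exact ⟨w, fun x hx => by simpa using hw x hx, rfl⟩

theorem exists_word_length_eq_wordLength {g : G} (hg : g ∈ Subgroup.closure S) :
    ∃ w : List G, w.length = wordLength S g ∧ (∀ x ∈ w, x ∈ S ∨ x⁻¹ ∈ S) ∧ w.prod = g := by
  obtain ⟨w, hw, hprod⟩ := exists_word_of_mem_closure hg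
  exact Nat.sInf_mem (s := {n | ∃ w : List G, w.length = n ∧ _ ∧ w.prod = g})
    ⟨_, w, rfl, hw, hprod⟩

theorem wordLength_mul_le {g h : G} (hg : g ∈ Subgroup.closure S)
    (hh : h ∈ Subgroup.closure S) :
    wordLength S (g * h) ≤ wordLength S g + wordLength S h := by
  obtain ⟨u, hu_len, hu, rfl⟩ := exists_word_length_eq_wordLength hg
  obtain ⟨v, hv_len, hv, rfl⟩ := exists_word_length_eq_wordLength hh
  calc wordLength S (u.prod * v.prod)
      = wordLength S (u ++ v).prod := by rw [List.prod_append]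
    _ ≤ (u ++ v).length :=
      wordLength_prod_le_length fun x hx => (List.mem_append.mp hx).elim (hu x) (hv x)
    _ = wordLength S u.prod + wordLength S v.prod := by rw [List.length_append, hu_len, hv_len]

theorem wordLength_list_prod_le {l : List G} (hl : ∀ g ∈ l, g ∈ Subgroup.closure S) :
    wordLength S l.prod ≤ (l.map (wordLength S)).sum := by
  induction l with
  | nil => simp [wordLength]
  | cons g l ih =>
    rw [List.prod_cons, List.map_cons, List.sum_cons]
    have hg := hl g List.mem_cons_self
    have hl' := fun x hx => hl x (List.mem_cons_of_mem g hx)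
    exact (wordLength_mul_le hg (Subgroup.list_prod_mem _ hl')).trans
      (Nat.add_le_add_left (ih hl') _)

theorem wordLength_zpow_le {s : G} (hs : s ∈ S) (n : ℤ) :
    wordLength S (s ^ n) ≤ n.natAbs := by
  rcases Int.natAbs_eq n with hn | hn
  · have := wordLength_prod_le_length (S := S) (w := List.replicate n.natAbs s)
      fun x hx => .inl (List.eq_of_mem_replicate hx ▸ hs)
    rwa [List.prod_replicate, List.length_replicate, ← zpow_natCast, ← hn] at this
  · have := wordLength_prod_le_length (S := S) (w := List.replicate n.natAbs s⁻¹)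
      fun x hx => .inr (List.eq_of_mem_replicate hx ▸ (inv_inv s).symm ▸ hs)
    rwa [List.prod_replicate, List.length_replicate, inv_pow, ← zpow_natCast, ← zpow_neg,
      ← hn] at this

end WordLength

section BaumslagSolitar

variable (q p : ℤ)

theorem closure_BSa_BSb_eq_top : Subgroup.closure {BSa q p, BSb q p} = ⊤ := by
  rw [← PresentedGroup.closure_range_of, Set.range, BSa, BSb]
  congr 1
  ext x
  simp [or_comm, eq_comm, Bool.exists_bool]

theorem BSa_zpow_q : BSa q p ^ q = BSb q p * BSa q p ^ p * (BSb q p)⁻¹ := by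
  have h := PresentedGroup.one_of_mem (Set.mem_singleton (FreeGroup.of true ^ q *
      (FreeGroup.of false * FreeGroup.of true ^ p * (FreeGroup.of false)⁻¹)⁻¹))
  simp only [map_mul, map_inv, map_zpow] at h
  exact mul_inv_eq_one.mp h

theorem BSa_zpow_q_mul (n : ℤ) :
    BSa q p ^ (q * n) = BSb q p * BSa q p ^ (p * n) * (BSb q p)⁻¹ := by
  rw [zpow_mul, BSa_zpow_q, conj_zpow, ← zpow_mul]

end BaumslagSolitar

theorem BS_a_word_length_recursion_general (p q : ℤ) (hp : 0 < p) (hpq : p < q)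
    (k : ℤ) :
    (wordLength ({BSa q p, BSb q p} : Set (BaumslagSolitar q p)) ((BSa q p) ^ (q * k)) : ℤ) ≤
      q + 1 +
        wordLength ({BSa q p, BSb q p} : Set (BaumslagSolitar q p))
          ((BSa q p) ^ (q * (p * k / q))) := by
  set S : Set (BaumslagSolitar q p) := {BSa q p, BSb q p}
  set m := p * k / q
  set r := p * k % q
  have hq : 0 < q := hp.trans hpq
  have hr : 0 ≤ r ∧ r < q := ⟨Int.emod_nonneg _ hq.ne', Int.emod_lt_of_pos _ hq⟩
  have hsplit : BSa q p ^ (q * k) =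
      [BSb q p ^ (1 : ℤ), BSa q p ^ (q * m), BSa q p ^ r, BSb q p ^ (-1 : ℤ)].prod := by
    conv_lhs => rw [BSa_zpow_q_mul, ← Int.mul_ediv_add_emod (p * k) q, zpow_add]
    simp only [List.prod_cons, List.prod_nil, zpow_one, zpow_neg_one, mul_one, mul_assoc, m, r]
  have hmem (g : BaumslagSolitar q p) : g ∈ Subgroup.closure S :=
    closure_BSa_BSb_eq_top q p ▸ Subgroup.mem_top g
  rw [hsplit]
  refine (Nat.cast_le.mpr (wordLength_list_prod_le fun g _ => hmem g)).trans ?_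
  simp only [List.map_cons, List.map_nil, List.sum_cons, List.sum_nil, Nat.cast_add,
    Nat.cast_zero]
  have hb₁ := wordLength_zpow_le (S := S) (.inr rfl) 1
  have hb₂ := wordLength_zpow_le (S := S) (.inr rfl) (-1)
  have ha := wordLength_zpow_le (S := S) (.inl rfl) r
  have hr_abs : (r.natAbs : ℤ) = r := Int.natAbs_of_nonneg hr.1
  simp only [Int.natAbs_one, Int.natAbs_neg] at hb₁ hb₂
  omega

/-- In `BS(q,p)` with `0 < p < q`, for every `k ≥ 1` one has
`‖a^{qk}‖ ≤ q + 1 + ‖a^{q·⌊pk/q⌋}‖`. -/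
theorem BS_a_word_length_recursion (p q : ℤ) (hp : 0 < p) (hpq : p < q)
    (k : ℤ) (hk : 1 ≤ k) :
    (wordLength ({BSa q p, BSb q p} : Set (BaumslagSolitar q p)) ((BSa q p) ^ (q * k)) : ℤ) ≤
      q + 1 +
        wordLength ({BSa q p, BSb q p} : Set (BaumslagSolitar q p))
          ((BSa q p) ^ (q * (p * k / q))) :=
  BS_a_word_length_recursion_general p q hp hpq k
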